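/- Let k > 0, ν > 0, and c ∈ ℝ. Then for all x > 0, 2k · d/dx W^k_{ν,c}(x) = W^k_{ν−k,c}(x) − c k W^k_{ν+k,c}(x). -/

import Mathlib

/-!
Write `W^k_{ν,c}(x) = ∑ a_r(ν) (x/2)^(2r + ν/k)`. Since `Γ_k(x + k) = x Γ_k(x)`, we have
`Γ_k(rk + ν + k) ≥ m^r r! Γ_k(ν + k)` with `m = min k (ν + k)`, so `∑ a_r(ν) q^r` is entire and
the series may be differentiated termwise. After multiplying by `2k`, the `r`-th derivative
term carries the factor `k(2r + ν/k) = (rk + ν) + rk`. The functional equation turns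
`(rk + ν) a_r(ν)` into `a_r(ν - k)`, giving `W^k_{ν-k,c}`; the remaining part `rk a_r(ν)`,
shifted by one index, equals `-ck a_{r-1}(ν + k)`, giving `-ck W^k_{ν+k,c}`.
-/
open Real

/-- The k-gamma function, `Γ_k(x) = k^(x/k - 1) * Γ(x/k)`. -/
noncomputable def kGamma (k x : ℝ) : ℝ := k ^ (x / k - 1) * Real.Gamma (x / k)

/-- The generalized k-Bessel function `W^k_{ν,c}(x)`. -/
noncomputable def kBesselW (k ν c x : ℝ) : ℝ :=
  ∑' r : ℕ, (-c) ^ r / (kGamma k (r * k + ν + k) * (r.factorial : ℝ)) *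
    (x / 2) ^ (2 * (r : ℝ) + ν / k)

section PowerSeries

variable {a : ℕ → ℝ}

lemma rpow_two_mul_add {y : ℝ} (hy : 0 < y) (r : ℕ) (t : ℝ) :
    y ^ (2 * (r : ℝ) + t) = (y ^ 2) ^ r * y ^ t := by
  rw [show 2 * (r : ℝ) + t = t + ((2 * r : ℕ) : ℝ) by push_cast; ring,
    rpow_add_natCast hy.ne', pow_mul, mul_comm]

lemma summable_mul_rpow_two_mul_add (ha : ∀ q, Summable fun r => a r * q ^ r) {y : ℝ}
    (hy : 0 < y) (s : ℝ) : Summable fun r : ℕ => a r * y ^ (2 * (r : ℝ) + s) := by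
  simpa only [rpow_two_mul_add hy, mul_left_comm _ (y ^ s), mul_comm _ (y ^ s)]
    using (ha (y ^ 2)).mul_left (y ^ s)

lemma summable_succ_mul_abs_mul_pow (ha : ∀ q, Summable fun r => a r * q ^ r) (q : ℝ) :
    Summable fun r : ℕ => ((r : ℝ) + 1) * |a r| * |q| ^ r := by
  refine ((ha (2 * |q|)).abs).of_nonneg_of_le (fun r => by positivity) fun r => ?_
  have hr : (r : ℝ) + 1 ≤ 2 ^ r := by exact_mod_cast Nat.lt_two_pow_self
  rw [abs_mul, abs_pow, abs_mul, abs_two, abs_abs, mul_pow]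
  calc ((r : ℝ) + 1) * |a r| * |q| ^ r = |a r| * (((r : ℝ) + 1) * |q| ^ r) := by ring
    _ ≤ |a r| * (2 ^ r * |q| ^ r) := by gcongr

theorem hasDerivAt_tsum_mul_rpow (ha : ∀ q, Summable fun r => a r * q ^ r) (s : ℝ) {x : ℝ}
    (hx : 0 < x) :
    HasDerivAt (fun y => ∑' r : ℕ, a r * y ^ (2 * (r : ℝ) + s))
      (∑' r : ℕ, a r * (2 * r + s) * x ^ (2 * (r : ℝ) + s - 1)) x := by
  obtain ⟨B, hB⟩ := isCompact_Icc.exists_bound_of_continuousOn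
    (continuousOn_id.rpow_const (s := Set.Icc (x / 2) (2 * x)) (p := s - 1)
      fun y hy => Or.inl (by simp only [id]; linarith [hy.1]))
  have hmem : x ∈ Set.Ioo (x / 2) (2 * x) := ⟨by linarith, by linarith⟩
  refine hasDerivAt_tsum_of_isPreconnected (g := fun r y => a r * y ^ (2 * (r : ℝ) + s))
    (g' := fun r y => a r * (2 * r + s) * y ^ (2 * (r : ℝ) + s - 1))
    (((summable_succ_mul_abs_mul_pow ha (4 * x ^ 2)).mul_left ((2 + |s|) * B)))
    isOpen_Ioo isPreconnected_Ioo (fun r y hy => ?_) (fun r y hy => ?_) hmem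
    (summable_mul_rpow_two_mul_add ha hx s) hmem
  · have hy0 : 0 < y := by linarith [hy.1]
    simpa only [mul_assoc] using
      (hasDerivAt_rpow_const (p := 2 * (r : ℝ) + s) (Or.inl hy0.ne')).const_mul (a r)
  · have hy0 : 0 < y := by linarith [hy.1]
    have hys : ‖y ^ (s - 1)‖ ≤ B := hB y (Set.Ioo_subset_Icc_self hy)
    have hyr : (y ^ 2) ^ r ≤ |4 * x ^ 2| ^ r := by
      rw [abs_of_nonneg (by positivity)]
      gcongr
      nlinarith [hy.2]
    have hcoef : |2 * (r : ℝ) + s| ≤ (2 + |s|) * ((r : ℝ) + 1) := by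
      have := abs_add_le (2 * (r : ℝ)) s
      rw [abs_of_nonneg (by positivity : (0 : ℝ) ≤ 2 * r)] at this
      nlinarith [abs_nonneg s]
    rw [sub_eq_add_neg, add_assoc, rpow_two_mul_add hy0, ← sub_eq_add_neg, norm_mul, norm_mul,
      norm_mul, norm_pow, Real.norm_eq_abs, Real.norm_eq_abs, Real.norm_eq_abs, abs_sq]
    calc |a r| * |2 * (r : ℝ) + s| * ((y ^ 2) ^ r * ‖y ^ (s - 1)‖)
        ≤ |a r| * ((2 + |s|) * ((r : ℝ) + 1)) * (|4 * x ^ 2| ^ r * B) := by gcongr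
      _ = (2 + |s|) * B * (((r : ℝ) + 1) * |a r| * |4 * x ^ 2| ^ r) := by ring

end PowerSeries

section KGamma

variable {k : ℝ}

lemma kGamma_pos (hk : 0 < k) {x : ℝ} (hx : 0 < x) : 0 < kGamma k x :=
  mul_pos (rpow_pos_of_pos hk _) (Gamma_pos_of_pos (div_pos hx hk))

lemma kGamma_add_self (hk : 0 < k) {x : ℝ} (hx : x ≠ 0) :
    kGamma k (x + k) = x * kGamma k x := by
  have hxk : x / k ≠ 0 := div_ne_zero hx hk.ne'
  rw [kGamma, kGamma, add_div, div_self hk.ne', Gamma_add_one hxk, add_sub_cancel_right,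
    rpow_sub_one hk.ne']
  field_simp

lemma pow_mul_factorial_mul_kGamma_le (hk : 0 < k) {ν : ℝ} (hν : 0 < ν + k) (r : ℕ) :
    min k (ν + k) ^ r * r.factorial * kGamma k (ν + k) ≤ kGamma k (r * k + ν + k) := by
  induction r with
  | zero => simp
  | succ r ih =>
    have hpos : 0 < r * k + ν + k := by linarith [mul_nonneg r.cast_nonneg hk.le]
    have hmin : ((r : ℝ) + 1) * min k (ν + k) ≤ r * k + ν + k := by
      nlinarith [min_le_left k (ν + k), min_le_right k (ν + k)]
    rw [show ((r + 1 : ℕ) : ℝ) * k + ν + k = (r * k + ν + k) + k by push_cast; ring,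
      kGamma_add_self hk hpos.ne', Nat.factorial_succ, pow_succ]
    push_cast
    calc min k (ν + k) ^ r * min k (ν + k) * (((r : ℝ) + 1) * r.factorial) * kGamma k (ν + k)
        = (((r : ℝ) + 1) * min k (ν + k)) *
            (min k (ν + k) ^ r * r.factorial * kGamma k (ν + k)) := by ring
      _ ≤ (r * k + ν + k) * kGamma k (r * k + ν + k) := by
        have := lt_min hk hν
        have := kGamma_pos hk hν
        gcongr

end KGamma

section KBessel

variable {k ν : ℝ}

noncomputable def kBesselCoeff (k ν c : ℝ) (r : ℕ) : ℝ :=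
  (-c) ^ r / (kGamma k (r * k + ν + k) * r.factorial)

lemma summable_kBesselCoeff_mul_pow (hk : 0 < k) (hν : 0 < ν + k) (c q : ℝ) :
    Summable fun r => kBesselCoeff k ν c r * q ^ r := by
  set m := min k (ν + k)
  have hm : 0 < m := lt_min hk hν
  have hG := kGamma_pos hk hν
  refine Summable.of_norm_bounded
    ((summable_pow_div_factorial (|c| * |q| / m)).mul_left (kGamma k (ν + k))⁻¹) fun r => ?_
  have hfac : (1 : ℝ) ≤ r.factorial := by exact_mod_cast r.factorial_pos
  have hlow := pow_mul_factorial_mul_kGamma_le hk hν r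
  have hGr : 0 < kGamma k (r * k + ν + k) := (by positivity : 0 < m ^ r * _ * _).trans_le hlow
  simp only [kBesselCoeff, norm_mul, norm_div, norm_pow, norm_neg, Real.norm_eq_abs,
    Nat.abs_cast, abs_of_pos hGr, div_pow, mul_pow]
  calc |c| ^ r / (kGamma k (r * k + ν + k) * r.factorial) * |q| ^ r
      ≤ |c| ^ r / (m ^ r * r.factorial * kGamma k (ν + k) * 1) * |q| ^ r := by gcongr
    _ = (kGamma k (ν + k))⁻¹ * (|c| ^ r * |q| ^ r / m ^ r / r.factorial) := by
      field_simp

lemma hasSum_kBesselW (hk : 0 < k) (hν : 0 < ν + k) (c : ℝ) {x : ℝ} (hx : 0 < x) :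
    HasSum (fun r : ℕ => kBesselCoeff k ν c r * (x / 2) ^ (2 * (r : ℝ) + ν / k))
      (kBesselW k ν c x) :=
  (summable_mul_rpow_two_mul_add (summable_kBesselCoeff_mul_pow hk hν c) (half_pos hx) _).hasSum

lemma hasDerivAt_kBesselW (hk : 0 < k) (hν : 0 < ν + k) (c : ℝ) {x : ℝ} (hx : 0 < x) :
    HasDerivAt (kBesselW k ν c)
      ((∑' r : ℕ, kBesselCoeff k ν c r * (2 * r + ν / k) *
        (x / 2) ^ (2 * (r : ℝ) + (ν - k) / k)) * (1 / 2)) x := by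
  have := (hasDerivAt_tsum_mul_rpow (summable_kBesselCoeff_mul_pow hk hν c) (ν / k)
    (half_pos hx)).comp x ((hasDerivAt_id x).div_const 2)
  simp_rw [add_sub_assoc, show ν / k - 1 = (ν - k) / k by field_simp] at this
  exact this

lemma mul_kBesselCoeff (hk : 0 < k) (c : ℝ) {r : ℕ} (h : r * k + ν ≠ 0) :
    (r * k + ν) * kBesselCoeff k ν c r = kBesselCoeff k (ν - k) c r := by
  rw [kBesselCoeff, kBesselCoeff, kGamma_add_self hk h,
    show r * k + (ν - k) + k = r * k + ν by ring, mul_div_assoc', mul_assoc,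
    mul_div_mul_left _ _ h]

lemma succ_mul_kBesselCoeff_succ (k ν c : ℝ) (r : ℕ) :
    ((r + 1 : ℕ) : ℝ) * k * kBesselCoeff k ν c (r + 1) =
      -(c * k) * kBesselCoeff k (ν + k) c r := by
  rw [kBesselCoeff, kBesselCoeff, Nat.factorial_succ, pow_succ,
    show ((r + 1 : ℕ) : ℝ) * k + ν + k = r * k + (ν + k) + k by push_cast; ring]
  push_cast
  field_simp

lemma hasSum_mul_kBesselCoeff (hk : 0 < k) (hν : 0 < ν) (c : ℝ) {x : ℝ} (hx : 0 < x) :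
    HasSum (fun r : ℕ => (r * k + ν) * kBesselCoeff k ν c r *
      (x / 2) ^ (2 * (r : ℝ) + (ν - k) / k)) (kBesselW k (ν - k) c x) := by
  have hcoeff (r : ℕ) : (r * k + ν) * kBesselCoeff k ν c r = kBesselCoeff k (ν - k) c r :=
    mul_kBesselCoeff hk c (by positivity)
  simpa only [hcoeff] using hasSum_kBesselW (ν := ν - k) hk (by linarith) c hx

lemma hasSum_natCast_mul_kBesselCoeff (hk : 0 < k) (hν : 0 < ν + k + k) (c : ℝ) {x : ℝ}
    (hx : 0 < x) :
    HasSum (fun r : ℕ => r * k * kBesselCoeff k ν c r * (x / 2) ^ (2 * (r : ℝ) + (ν - k) / k))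
      (-(c * k) * kBesselW k (ν + k) c x) := by
  have hshift (r : ℕ) :
      ((r + 1 : ℕ) : ℝ) * k * kBesselCoeff k ν c (r + 1) *
          (x / 2) ^ (2 * ((r + 1 : ℕ) : ℝ) + (ν - k) / k) =
        -(c * k) * (kBesselCoeff k (ν + k) c r * (x / 2) ^ (2 * (r : ℝ) + (ν + k) / k)) := by
    rw [succ_mul_kBesselCoeff_succ, mul_assoc,
      show 2 * ((r + 1 : ℕ) : ℝ) + (ν - k) / k = 2 * r + (ν + k) / k by push_cast; field_simp; ring]
  refine (hasSum_nat_add_iff' 1).mp ?_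
  simpa only [hshift, Finset.range_one, Finset.sum_singleton, CharP.cast_eq_zero, zero_mul,
    sub_zero] using (hasSum_kBesselW hk hν c hx).mul_left (-(c * k))

end KBessel

theorem kBessel_deriv_recurrence (k ν c : ℝ) (hk : 0 < k) (hν : 0 < ν) (x : ℝ) (hx : 0 < x) :
    2 * k * deriv (kBesselW k ν c) x =
      kBesselW k (ν - k) c x - c * k * kBesselW k (ν + k) c x := by
  have hsum := (hasSum_mul_kBesselCoeff hk hν c hx).add
    (hasSum_natCast_mul_kBesselCoeff (ν := ν) hk (by linarith) c hx)
  rw [neg_mul, ← sub_eq_add_neg] at hsum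
  rw [(hasDerivAt_kBesselW hk (by linarith) c hx).deriv, ← hsum.tsum_eq, ← tsum_mul_right,
    ← tsum_mul_left]
  refine tsum_congr fun r => ?_
  field_simp
  ring
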